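/- arXiv:2104.10346 — 7 statements merged into one kernel-verified Lean document; each statement's English description precedes it below -/
import Mathlib

section
/- For positive integers m, n with m < n, and any integer k with 1 < 2k ≤ m and k ≤ n - m, one has P(n,k) - P(n-m,k) = m * Σ_{r=1}^{k} C(k,r) * P(m-r-1, r-1) * P(n-m+r, k-r), where P(a,b) = a!/(a-b)! denotes the falling factorial (number of b-permutations of a) and C(k,r) the binomial coefficient. -/
/-!
Since `∑ₖ P(x, k) zᵏ / k! = (1 + z) ^ x`, the identity compares coefficients of `zᵏ / k!` in
`(1 + z) ^ n = (1 + z) ^ (n - m) (∑ᵣ aᵣ (z (1 + z)) ^ r - (-z) ^ m)`, from the Lucas expansion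
`x ^ m + y ^ m = ∑ᵣ (-1) ^ r m / (m - r) C(m - r, r) (x y) ^ r (x + y) ^ (m - 2r)`
at `x = 1 + z`, `y = -z`; here `r! aᵣ = m P(m - r - 1, r - 1)`, and the error term `(-z) ^ m`
is invisible for `k < m`.
Instead of generating functions we use recurrences: in `t = n - m` both sides satisfy Pascal's rule
`P(x + 1, k + 1) = P(x, k + 1) + (k + 1) P(x, k)`, in `m` the Lucas recurrence
`aᵣ(m + 1) = aᵣ(m) + aᵣ₋₁(m - 1)`, so induction on `k` reduces everything to `m = k + 1`, `t = 0`,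
where the sum has a single nonzero term.
-/

open Finset
open scoped Nat

namespace Nat

theorem succ_descFactorial_succ_eq_add (n k : ℕ) :
    (n + 1).descFactorial (k + 1) = n.descFactorial (k + 1) + (k + 1) * n.descFactorial k := by
  rw [succ_descFactorial_succ, descFactorial_succ, ← Nat.add_mul]
  rcases le_or_gt k n with h | h
  · congr 1; omega
  · simp [descFactorial_of_lt h]

theorem descFactorial_eq_factorial_of_le_succ {n k : ℕ} (hk : k ≤ n) (hn : n ≤ k + 1) :
    n.descFactorial k = n ! := by
  have h := factorial_mul_descFactorial hk
  rwa [factorial_eq_one.mpr (by omega : n - k ≤ 1), one_mul] at h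

end Nat

/-- `r!` times the coefficient of `(z (1 + z)) ^ r` in the Lucas expansion of `(1 + z) ^ m`. -/
def lucasCoeff : ℕ → ℕ → ℕ
  | _, 0 => 1
  | m, r + 1 => m * (m - r - 2).descFactorial r

theorem lucasCoeff_add_two {m r : ℕ} (h : r < m) :
    lucasCoeff (m + 2) (r + 1) = lucasCoeff (m + 1) (r + 1) + (r + 1) * lucasCoeff m r := by
  rcases r with _ | r
  · simp [lucasCoeff]
  obtain ⟨a, rfl⟩ : ∃ a, m = a + r + 2 := ⟨m - r - 2, by omega⟩
  simp only [lucasCoeff, show a + r + 2 + 2 - (r + 1) - 2 = a + 1 by omega,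
    show a + r + 2 + 1 - (r + 1) - 2 = a by omega, show a + r + 2 - r - 2 = a by omega]
  rw [Nat.succ_descFactorial_succ_eq_add, Nat.descFactorial_succ]
  rcases le_or_gt r a with hr | hr
  · obtain ⟨e, rfl⟩ := exists_add_of_le hr
    rw [Nat.add_sub_cancel_left]; ring
  · simp [Nat.descFactorial_of_lt hr]

def lucasSum (m t k : ℕ) : ℕ :=
  ∑ p ∈ antidiagonal k, k.choose p.1 * lucasCoeff m p.1 * (t + p.1).descFactorial p.2

theorem lucasSum_succ_offset (m t k : ℕ) :
    lucasSum m (t + 1) (k + 1) = lucasSum m t (k + 1) + (k + 1) * lucasSum m t k := by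
  simp only [lucasSum, Nat.sum_antidiagonal_succ', Nat.descFactorial_zero, mul_sum]
  rw [add_assoc, ← sum_add_distrib]
  congr 1
  refine sum_congr rfl fun ⟨i, j⟩ hij => ?_
  have hchoose : (k + 1).choose i * (j + 1) = (k + 1) * k.choose i := by
    rw [mul_comm (k + 1), Nat.choose_mul_succ_eq, show k + 1 - i = j + 1 by
      rw [HasAntidiagonal.mem_antidiagonal] at hij; omega]
  dsimp only
  rw [show t + 1 + i = t + i + 1 by ring, Nat.succ_descFactorial_succ_eq_add]
  linear_combination (lucasCoeff m i * (t + i).descFactorial j) * hchoose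

theorem lucasSum_succ_length {m k : ℕ} (h : k < m) (t : ℕ) :
    lucasSum (m + 2) t (k + 1) = lucasSum (m + 1) t (k + 1) + (k + 1) * lucasSum m (t + 1) k := by
  simp only [lucasSum, Nat.sum_antidiagonal_succ, mul_sum]
  rw [add_assoc, ← sum_add_distrib]
  congr 1
  refine sum_congr rfl fun ⟨i, j⟩ hij => ?_
  dsimp only
  rw [lucasCoeff_add_two (by rw [HasAntidiagonal.mem_antidiagonal] at hij; omega),
    show t + 1 + i = t + (i + 1) by ring]
  linear_combination
    (lucasCoeff m i * (t + (i + 1)).descFactorial j) * (Nat.add_one_mul_choose_eq k i).symm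

theorem lucasSum_self_succ (j : ℕ) : lucasSum (j + 1) 0 j = (j + 1)! := by
  rcases j with _ | j
  · simp [lucasSum, lucasCoeff]
  rw [lucasSum, Nat.sum_antidiagonal_succ,
    sum_eq_single_of_mem (j / 2, j - j / 2) (HasAntidiagonal.mem_antidiagonal.2 (by omega))]
  · have hchoose := Nat.choose_mul_factorial_mul_factorial (n := j + 1) (k := j / 2 + 1) (by omega)
    rw [show j + 1 - (j / 2 + 1) = j - j / 2 by omega] at hchoose
    simp only [lucasCoeff, zero_add, Nat.zero_descFactorial_succ, mul_zero,
      show j + 1 + 1 - j / 2 - 2 = j - j / 2 by omega,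
      Nat.descFactorial_eq_factorial_of_le_succ (n := j - j / 2) (k := j / 2) (by omega) (by omega),
      Nat.descFactorial_eq_factorial_of_le_succ (n := j / 2 + 1) (k := j - j / 2) (by omega)
        (by omega),
      Nat.factorial_succ (j + 1), ← hchoose]
    ring
  · rintro ⟨i, l⟩ hil hne
    rw [HasAntidiagonal.mem_antidiagonal] at hil
    simp only [ne_eq, Prod.mk.injEq] at hil hne
    simp only [lucasCoeff, zero_add, show j + 1 + 1 - i - 2 = l by omega]
    rcases (by omega : l < i ∨ i + 1 < l) with h | h <;> simp [Nat.descFactorial_of_lt h]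

theorem descFactorial_add_eq_lucasSum {m k : ℕ} (h : k < m) (t : ℕ) :
    (m + t).descFactorial k = lucasSum m t k := by
  induction k generalizing m t with
  | zero => simp [lucasSum, lucasCoeff]
  | succ k ih =>
    have offset_zero : ∀ m, k + 1 < m → m.descFactorial (k + 1) = lucasSum m 0 (k + 1) := by
      intro m hm
      induction m, hm using Nat.le_induction with
      | base =>
        rw [lucasSum_self_succ, Nat.descFactorial_eq_factorial_of_le_succ (by omega) le_rfl]
      | succ m hm ihm =>
        obtain ⟨M, rfl⟩ : ∃ M, m = M + 1 := ⟨m - 1, by omega⟩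
        rw [Nat.succ_descFactorial_succ_eq_add, ihm, lucasSum_succ_length (by omega),
          ← ih (by omega)]
    induction t with
    | zero => exact offset_zero m h
    | succ t iht =>
      rw [← add_assoc, Nat.succ_descFactorial_succ_eq_add, iht, ih (by omega), lucasSum_succ_offset]

theorem lucasSum_eq_add_sum (m t k : ℕ) :
    lucasSum m t k = t.descFactorial k + m * ∑ r ∈ Icc 1 k,
      k.choose r * (m - r - 1).descFactorial (r - 1) * (t + r).descFactorial (k - r) := by
  rw [lucasSum, Nat.sum_antidiagonal_eq_sum_range_succ_mk, sum_range_succ', add_comm, mul_sum,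
    ← Ico_add_one_right_eq_Icc, sum_Ico_eq_sum_range, Nat.add_sub_cancel]
  congr 1
  · simp [lucasCoeff]
  refine sum_congr rfl fun r _ => ?_
  rw [add_comm 1 r, show m - (r + 1) - 1 = m - r - 2 by omega, Nat.add_sub_cancel, lucasCoeff]
  ring

theorem stmt_0_general (m n k : ℕ) (hmn : m < n)
    (hk1 : 1 < 2 * k) (hkm : 2 * k ≤ m) :
    n.descFactorial k - (n - m).descFactorial k =
      m * ∑ r ∈ Finset.Icc 1 k,
        k.choose r * (m - r - 1).descFactorial (r - 1) *
          (n - m + r).descFactorial (k - r) := by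
  obtain ⟨t, rfl⟩ : ∃ t, n = m + t := ⟨n - m, by omega⟩
  rw [Nat.add_sub_cancel_left, descFactorial_add_eq_lucasSum (by omega), lucasSum_eq_add_sum,
    Nat.add_sub_cancel_left]

/-- P(n,k) - P(n-m,k) = m * Σ_{r=1}^{k} C(k,r) P(m-r-1,r-1) P(n-m+r,k-r). -/
theorem stmt_0 (m n k : ℕ) (hm : 0 < m) (hmn : m < n)
    (hk1 : 1 < 2 * k) (hkm : 2 * k ≤ m) (hknm : k ≤ n - m) :
    n.descFactorial k - (n - m).descFactorial k =
      m * ∑ r ∈ Finset.Icc 1 k,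
        k.choose r * (m - r - 1).descFactorial (r - 1) *
          (n - m + r).descFactorial (k - r) :=
  stmt_0_general m n k hmn hk1 hkm
end

section
/- For natural numbers n and k, C(n+k, k)^2 = Σ_{r=0}^{k} C(k,r)^2 * C(n+2k-r, 2k) (Li Shanlan's identity). -/
/-!
Expand `C(n+2k-r, 2k) = Σᵢ C(k-r, i) C(n+k, 2k-i)` by Vandermonde and swap the sums.
Trinomial revision `C(k,r) C(k-r,i) = C(k,i) C(k-i,r)` turns the inner sum over `r` into
another Vandermonde sum, `C(2k-i, k)`; then `C(n+k, 2k-i) C(2k-i, k) = C(n+k, k) C(n, k-i)`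
and a last Vandermonde sum gives `C(n+k, k)²`.
-/

open Finset

namespace Nat

theorem choose_mul_choose_sub_comm (k r i : ℕ) :
    k.choose r * (k - r).choose i = k.choose i * (k - i).choose r := by
  have hr := choose_mul (n := k) (Nat.le_add_right r i)
  have hi := choose_mul (n := k) (Nat.le_add_left i r)
  rw [Nat.add_sub_cancel_left] at hr
  rw [Nat.add_sub_cancel] at hi
  rw [← hr, ← hi, choose_symm_add]

theorem add_choose_eq_sum_range {a b m c : ℕ} (hac : a ≤ c) (hcm : c ≤ m) :
    (a + b).choose m = ∑ i ∈ range (c + 1), a.choose i * b.choose (m - i) := by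
  rw [add_choose_eq, Finset.Nat.sum_antidiagonal_eq_sum_range_succ_mk]
  refine (sum_subset (range_subset_range.mpr (by omega)) fun i hm hc => ?_).symm
  rw [mem_range] at hm hc
  rw [choose_eq_zero_of_lt (by omega), zero_mul]

end Nat

/-- Li Shanlan's identity. -/
theorem stmt_2 (n k : ℕ) :
    ((n + k).choose k) ^ 2 =
      ∑ r ∈ Finset.range (k + 1),
        (k.choose r) ^ 2 * (n + 2 * k - r).choose (2 * k) := by
  symm
  calc ∑ r ∈ range (k + 1), (k.choose r) ^ 2 * (n + 2 * k - r).choose (2 * k)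
      = ∑ r ∈ range (k + 1), ∑ i ∈ range (k + 1),
          (k.choose r) ^ 2 * ((k - r).choose i * (n + k).choose (2 * k - i)) := by
        refine sum_congr rfl fun r hr => ?_
        rw [show n + 2 * k - r = (k - r) + (n + k) by grind,
          Nat.add_choose_eq_sum_range (c := k) (by omega) (by omega), mul_sum]
    _ = ∑ i ∈ range (k + 1), ∑ r ∈ range (k + 1),
          k.choose i * (n + k).choose (2 * k - i) * ((k - i).choose r * k.choose (k - r)) := by
        rw [sum_comm]
        refine sum_congr rfl fun i _ => sum_congr rfl fun r hr => ?_
        rw [Nat.choose_symm (by grind)]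
        linear_combination (k.choose r * (n + k).choose (2 * k - i)) *
          Nat.choose_mul_choose_sub_comm k r i
    _ = ∑ i ∈ range (k + 1),
          k.choose i * ((n + k).choose (2 * k - i) * (2 * k - i).choose k) := by
        refine sum_congr rfl fun i hi => ?_
        rw [← mul_sum, show 2 * k - i = (k - i) + k by grind,
          ← Nat.add_choose_eq_sum_range (by omega) le_rfl, mul_assoc]
    _ = ∑ i ∈ range (k + 1), (n + k).choose k * (k.choose i * n.choose (k - i)) := by
        refine sum_congr rfl fun i hi => ?_
        rw [Nat.choose_mul (by grind), show n + k - k = n by omega,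
          show 2 * k - i - k = k - i by grind]
        ring
    _ = ((n + k).choose k) ^ 2 := by
        rw [← mul_sum, ← Nat.add_choose_eq_sum_range le_rfl le_rfl, add_comm k n, sq]
end

section
/- Let j ≥ 0 and η = 1 + 2 + 2^2 + ... + 2^j = 2^{j+1} - 1. Let k be an integer with 1 ≤ k < η, and set a = η - k. For each i with 1 ≤ i ≤ a, define b_i to be the number obtained from the binary expansion of k + i by deleting all binary digits in positions strictly below the position t_i determined by 2^{t_i - 1} ≤ i < 2^{t_i} (i.e. b_i = Σ_{r ≥ t_i} a_{i,r} 2^r where k + i = Σ_r a_{i,r} 2^r is the binary expansion and t_i = ⌊log₂ i⌋ + 1). Then k * a = Σ_{i=1}^{a} b_i. -/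
/-!
Induct on `a` with `k + a + 1 = 2 ^ n` fixed. The sums for `(k, a + 1)` and `(k + 1, a)`
truncate the same numbers `k + i + 1`, at levels taken from neighbouring indices; the level
rises only when the index reaches a power of two `2 ^ s`, and then the binary digit `s` of
`k + 2 ^ s` is lost. As `k` and `a + 1` have complementary binary digits below `n`, the lost
digits add up to `2 ⌊(a + 1) / 2⌋`, and what remains is
`k - a = 2 ⌊(k + 1) / 2⌋ - 2 ⌊(a + 1) / 2⌋`, true because `k ≡ a [MOD 2]`.
-/

open Finset

def truncAt (t n : ℕ) : ℕ := 2 ^ t * (n / 2 ^ t)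

lemma truncAt_eq_truncAt_succ_add (t n : ℕ) :
    truncAt t n = truncAt (t + 1) n + 2 ^ t * (n / 2 ^ t % 2) := by
  have h := Nat.div_add_mod (n / 2 ^ t) 2
  rw [truncAt, truncAt, pow_succ, ← Nat.div_div_eq_div_mul]
  nth_rewrite 1 [← h]
  ring

lemma truncAt_eq_truncAt_add_sum {t u : ℕ} (h : t ≤ u) (n : ℕ) :
    truncAt t n = truncAt u n + ∑ s ∈ Ico t u, 2 ^ s * (n / 2 ^ s % 2) := by
  induction u, h using Nat.le_induction with
  | base => simp
  | succ u htu ih => rw [sum_Ico_succ_top htu, ih, truncAt_eq_truncAt_succ_add u]; ring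

lemma truncAt_one (n : ℕ) : truncAt 1 n = 2 * (n / 2) := by
  simp [truncAt]

lemma truncAt_of_lt {t n : ℕ} (h : n < 2 ^ t) : truncAt t n = 0 := by
  simp [truncAt, Nat.div_eq_of_lt h]

lemma div_two_pow_mod_two_add_eq_one {k m n s : ℕ} (h : k + m + 1 = 2 ^ n) (hs : s < n) :
    k / 2 ^ s % 2 + m / 2 ^ s % 2 = 1 := by
  have hbit := Nat.testBit_two_pow_sub_succ (x := k) (n := n) (by omega) s
  rw [show 2 ^ n - (k + 1) = m by omega] at hbit
  by_cases hk : k / 2 ^ s % 2 = 1 <;>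
    simp [Nat.testBit_eq_decide_div_mod_eq, hs, hk] at hbit <;> omega

lemma add_one_eq_two_pow_of_log_lt_of_le_log {i s : ℕ} (h₁ : Nat.log 2 i < s)
    (h₂ : s ≤ Nat.log 2 (i + 1)) : i + 1 = 2 ^ s := by
  have := Nat.lt_pow_of_log_lt one_lt_two h₁
  have := Nat.pow_le_of_le_log (by omega) h₂
  omega

lemma sum_range_sum_Ico_of_monotone {M : Type*} [AddCommMonoid M] {l : ℕ → ℕ}
    (hl : Monotone l) (g : ℕ → M) (a : ℕ) :
    ∑ i ∈ range a, ∑ s ∈ Ico (l i) (l (i + 1)), g s = ∑ s ∈ Ico (l 0) (l a), g s := by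
  induction a with
  | zero => simp
  | succ a ih =>
    rw [sum_range_succ, ih, sum_Ico_consecutive _ (hl (Nat.zero_le a)) (hl a.le_succ)]

lemma truncAt_log_eq_add_sum (k i : ℕ) :
    truncAt (Nat.log 2 (i + 1) + 1) (k + (i + 1 + 1)) =
      truncAt (Nat.log 2 (i + 1 + 1) + 1) (k + (i + 1 + 1)) +
        ∑ s ∈ Ico (Nat.log 2 (i + 1) + 1) (Nat.log 2 (i + 1 + 1) + 1),
          2 ^ s * ((k / 2 ^ s + 1) % 2) := by
  rw [truncAt_eq_truncAt_add_sum (u := Nat.log 2 (i + 1 + 1) + 1) (by gcongr; omega)]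
  congr 1
  refine sum_congr rfl fun s hs => ?_
  rw [mem_Ico] at hs
  have hpow := add_one_eq_two_pow_of_log_lt_of_le_log (i := i + 1) (s := s) (by omega) (by omega)
  rw [hpow, Nat.add_div_right _ (by positivity)]

lemma sum_range_sum_Ico_log_eq_truncAt {k a n : ℕ} (h : k + a + 2 = 2 ^ n) :
    ∑ i ∈ range a, ∑ s ∈ Ico (Nat.log 2 (i + 1) + 1) (Nat.log 2 (i + 1 + 1) + 1),
      2 ^ s * ((k / 2 ^ s + 1) % 2) = truncAt 1 (a + 1) := by
  have hmono : Monotone fun i => Nat.log 2 (i + 1) + 1 := fun _ _ hi => by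
    dsimp only; gcongr
  rw [sum_range_sum_Ico_of_monotone hmono,
    truncAt_eq_truncAt_add_sum (u := Nat.log 2 (a + 1) + 1) (by omega),
    truncAt_of_lt (Nat.lt_pow_succ_log_self one_lt_two _), zero_add, zero_add, Nat.log_one_right]
  refine sum_congr rfl fun s hs => ?_
  have hsn : s < n := by
    have := Nat.log_lt_of_lt_pow (b := 2) (x := n) (y := a + 1) (by omega) (by omega)
    rw [mem_Ico] at hs
    omega
  have := div_two_pow_mod_two_add_eq_one (m := a + 1) (by omega) hsn
  congr 1
  omega

lemma sum_range_truncAt_log_eq_mul {n k a : ℕ} (h : k + a + 1 = 2 ^ n) :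
    ∑ i ∈ range a, truncAt (Nat.log 2 (i + 1) + 1) (k + (i + 1)) = k * a := by
  induction a generalizing k with
  | zero => simp
  | succ a ih =>
    have hstep := ih (k := k + 1) (by omega)
    rw [sum_congr rfl fun i _ => by
        rw [show k + 1 + (i + 1) = k + (i + 1 + 1) by omega, truncAt_log_eq_add_sum],
      sum_add_distrib, sum_range_sum_Ico_log_eq_truncAt (n := n) (by omega)] at hstep
    rw [sum_range_succ']
    have heven : 2 ^ n % 2 = 0 :=
      Nat.two_pow_mod_two_eq_zero.mpr (Nat.pos_of_ne_zero (by rintro rfl; simp at h))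
    simp only [zero_add, Nat.log_one_right, truncAt_one] at hstep ⊢
    have : (k + 1) * a = k * a + a := by ring
    have : k * (a + 1) = k * a + k := by ring
    omega

theorem stmt_3_general (j k a : ℕ)
    (ha : a = (2 ^ (j + 1) - 1) - k) :
    k * a = ∑ i ∈ Finset.Icc 1 a,
      2 ^ (Nat.log 2 i + 1) * ((k + i) / 2 ^ (Nat.log 2 i + 1)) := by
  rcases lt_or_ge k (2 ^ (j + 1)) with hk | hk
  · rw [← Ico_add_one_right_eq_Icc, sum_Ico_eq_sum_range]
    simp only [add_tsub_cancel_right, add_comm 1]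
    exact (sum_range_truncAt_log_eq_mul (n := j + 1) (by omega)).symm
  · obtain rfl : a = 0 := by omega
    simp

/-- k * a = Σ_{i=1}^{a} b_i where b_i is the truncation of the
binary expansion of k + i at level t_i = ⌊log₂ i⌋ + 1. -/
theorem stmt_3 (j k a : ℕ) (hk1 : 1 ≤ k) (hk2 : k < 2 ^ (j + 1) - 1)
    (ha : a = (2 ^ (j + 1) - 1) - k) :
    k * a = ∑ i ∈ Finset.Icc 1 a,
      2 ^ (Nat.log 2 i + 1) * ((k + i) / 2 ^ (Nat.log 2 i + 1)) :=
  stmt_3_general j k a ha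
end

section
/- Let m ≥ 1 and let k be an integer with 1 ≤ k < 2^{m+1} - 1, and set b = (2^{m+1} - 1) - k and a = b + 2^{m+1}. With b_i defined as the truncation of the binary expansion of k + i at level t_i (where 2^{t_i - 1} ≤ i < 2^{t_i}), one has b_{b+1} = b_{b+2} = ... = b_{b+k} = 2^{m+1} and b_{b+k+1} = ... = b_{b+2^{m+1}} = 0. -/
/-- The truncation `b_i(n) = 2^{t_i} ⌊n / 2^{t_i}⌋`, where `t_i = log₂ i + 1` is the bit length
of `i`. -/
def truncation (i n : ℕ) : ℕ :=
  2 ^ (Nat.log 2 i + 1) * (n / 2 ^ (Nat.log 2 i + 1))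

theorem Nat.mul_div_eq_of_dvd_of_le_of_lt {c d n : ℕ} (hd : d ∣ c) (hc : c ≤ n) (hn : n < c + d) :
    d * (n / d) = c := by
  obtain ⟨q, rfl⟩ := hd
  have hd0 : 0 < d := by omega
  rw [Nat.div_eq_of_lt_le (by rwa [mul_comm]) (by rw [Nat.succ_mul, mul_comm]; exact hn)]

theorem truncation_eq_pow {i n e : ℕ} (hi0 : i ≠ 0) (hi : i < 2 ^ e) (hle : 2 ^ e ≤ n)
    (hlt : n < 2 ^ e + i) : truncation i n = 2 ^ e := by
  have hlog : Nat.log 2 i + 1 ≤ e := Nat.log_lt_of_lt_pow hi0 hi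
  refine Nat.mul_div_eq_of_dvd_of_le_of_lt (pow_dvd_pow 2 hlog) hle ?_
  exact hlt.trans_le (Nat.add_le_add_left (Nat.lt_pow_succ_log_self one_lt_two i).le _)

theorem truncation_eq_zero {i n e : ℕ} (hi : 2 ^ e ≤ i) (hn : n < 2 ^ (e + 1)) :
    truncation i n = 0 := by
  have hlog : e + 1 ≤ Nat.log 2 i + 1 := Nat.succ_le_succ (Nat.le_log_of_pow_le one_lt_two hi)
  rw [truncation, Nat.div_eq_of_lt (hn.trans_le (Nat.pow_le_pow_right two_pos hlog)), mul_zero]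

theorem stmt_4_general (m k b : ℕ) (hk2 : k < 2 ^ (m + 1) - 1)
    (hb : b = (2 ^ (m + 1) - 1) - k) :
    (∀ i, b + 1 ≤ i → i ≤ b + k →
        2 ^ (Nat.log 2 i + 1) * ((k + i) / 2 ^ (Nat.log 2 i + 1)) = 2 ^ (m + 1)) ∧
    (∀ i, b + k + 1 ≤ i → i ≤ b + 2 ^ (m + 1) →
        2 ^ (Nat.log 2 i + 1) * ((k + i) / 2 ^ (Nat.log 2 i + 1)) = 0) := by
  have hpow : 2 ^ (m + 1 + 1) = 2 ^ (m + 1) + 2 ^ (m + 1) := by rw [pow_succ]; omega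
  refine ⟨fun i hi₁ hi₂ => ?_, fun i hi₁ hi₂ => ?_⟩
  · exact truncation_eq_pow (e := m + 1) (by omega) (by omega) (by omega) (by omega)
  · exact truncation_eq_zero (e := m + 1) (by omega) (by omega)

/-- with b = (2^{m+1}-1) - k and a = b + 2^{m+1},
the truncations b_i of k+i satisfy b_{b+1} = ⋯ = b_{b+k} = 2^{m+1}
and b_{b+k+1} = ⋯ = b_{b+2^{m+1}} = 0. -/
theorem stmt_4 (m k b : ℕ) (hm : 1 ≤ m) (hk1 : 1 ≤ k) (hk2 : k < 2 ^ (m + 1) - 1)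
    (hb : b = (2 ^ (m + 1) - 1) - k) :
    (∀ i, b + 1 ≤ i → i ≤ b + k →
        2 ^ (Nat.log 2 i + 1) * ((k + i) / 2 ^ (Nat.log 2 i + 1)) = 2 ^ (m + 1)) ∧
    (∀ i, b + k + 1 ≤ i → i ≤ b + 2 ^ (m + 1) →
        2 ^ (Nat.log 2 i + 1) * ((k + i) / 2 ^ (Nat.log 2 i + 1)) = 0) :=
  stmt_4_general m k b hk2 hb
end

section
/- Let m ≥ 1 and k = 2^{m+1} - 1, a = 2^{m+1}. For 1 ≤ i ≤ a, define b_i = 2^{t_i} ⌊(k+i)/2^{t_i}⌋ where 2^{t_i - 1} ≤ i < 2^{t_i}. Then b_i = 2^{m+1} for i = 1, ..., 2^{m+1} - 1 and b_{2^{m+1}} = 0; in particular Σ_{i=1}^{a} b_i = k * a. -/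
/-!
Write `t` for the bit length of `i`. When `1 ≤ i < 2^(m+1)` we have `t ≤ m + 1`, so `2^t` divides
`2^(m+1)` and `k + i = 2^(m+1) + (i - 1)` with `i - 1 < 2^t`: clearing the lowest `t` bits leaves
exactly `2^(m+1)`. For `i = 2^(m+1)` the bit length is `m + 2` and `k + i < 2^(m+2)`, so nothing
is left. The sum is therefore `(2^(m+1) - 1) · 2^(m+1) = k · a`.
-/

/-- The paper's `b_i`: `k + i` with its lowest `t_i = Nat.log 2 i + 1` binary digits cleared. -/
def truncBelowBitLength (k i : ℕ) : ℕ :=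
  2 ^ (Nat.log 2 i + 1) * ((k + i) / 2 ^ (Nat.log 2 i + 1))

lemma mul_div_pred_add_eq_of_dvd {d N i : ℕ} (hN : 0 < N) (hd : d ∣ N) (hi : 0 < i)
    (hid : i ≤ d) : d * ((N - 1 + i) / d) = N := by
  obtain ⟨c, rfl⟩ := hd
  have hd : 0 < d := by omega
  have hc : 0 < c := Nat.pos_of_mul_pos_left hN
  have hsplit : d * c - 1 + i = d * c + (i - 1) := by
    have : d ≤ d * c := Nat.le_mul_of_pos_right d hc
    omega
  rw [hsplit, Nat.mul_add_div hd, Nat.div_eq_of_lt (by omega), add_zero]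

lemma truncBelowBitLength_pow_sub_one_of_lt (n : ℕ) {i : ℕ} (hi : 0 < i) (hin : i < 2 ^ n) :
    truncBelowBitLength (2 ^ n - 1) i = 2 ^ n := by
  have hlog : Nat.log 2 i + 1 ≤ n := Nat.log_lt_of_lt_pow hi.ne' hin
  exact mul_div_pred_add_eq_of_dvd (Nat.two_pow_pos n) (pow_dvd_pow 2 hlog) hi
    (Nat.lt_pow_succ_log_self Nat.one_lt_two i).le

lemma truncBelowBitLength_pow_sub_one_self (n : ℕ) :
    truncBelowBitLength (2 ^ n - 1) (2 ^ n) = 0 := by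
  have hlt : 2 ^ n - 1 + 2 ^ n < 2 ^ (n + 1) := by
    have := Nat.two_pow_pos n
    rw [pow_succ]
    omega
  rw [truncBelowBitLength, Nat.log_pow Nat.one_lt_two, Nat.div_eq_of_lt hlt, mul_zero]

lemma sum_truncBelowBitLength_pow_sub_one (n : ℕ) :
    ∑ i ∈ Finset.Icc 1 (2 ^ n), truncBelowBitLength (2 ^ n - 1) i = (2 ^ n - 1) * 2 ^ n := by
  have hpos := Nat.two_pow_pos n
  obtain ⟨p, hp⟩ : ∃ p, 2 ^ n = p + 1 := ⟨2 ^ n - 1, by omega⟩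
  rw [hp, Finset.sum_Icc_succ_top (by omega), ← hp, truncBelowBitLength_pow_sub_one_self,
    add_zero, Finset.sum_congr rfl fun i hi => truncBelowBitLength_pow_sub_one_of_lt n
      (Finset.mem_Icc.mp hi).1 (by rw [hp]; exact Nat.lt_succ_of_le (Finset.mem_Icc.mp hi).2),
    Finset.sum_const, Nat.card_Icc, smul_eq_mul]
  congr 1
  omega

theorem stmt_5_general (m k a : ℕ) (hk : k = 2 ^ (m + 1) - 1)
    (ha : a = 2 ^ (m + 1)) :
    (∀ i, 1 ≤ i → i ≤ 2 ^ (m + 1) - 1 →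
        2 ^ (Nat.log 2 i + 1) * ((k + i) / 2 ^ (Nat.log 2 i + 1)) = 2 ^ (m + 1)) ∧
    2 ^ (Nat.log 2 a + 1) * ((k + a) / 2 ^ (Nat.log 2 a + 1)) = 0 ∧
    (∑ i ∈ Finset.Icc 1 a,
        2 ^ (Nat.log 2 i + 1) * ((k + i) / 2 ^ (Nat.log 2 i + 1))) = k * a := by
  subst hk ha
  have hpos := Nat.two_pow_pos (m + 1)
  exact ⟨fun i hi hi' => truncBelowBitLength_pow_sub_one_of_lt (m + 1) hi (by omega),
    truncBelowBitLength_pow_sub_one_self (m + 1), sum_truncBelowBitLength_pow_sub_one (m + 1)⟩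

/-- for k = 2^{m+1} - 1 and a = 2^{m+1}, the truncations b_i equal
2^{m+1} for i = 1, …, 2^{m+1} - 1 and b_a = 0, and Σ b_i = k * a. -/
theorem stmt_5 (m k a : ℕ) (hm : 1 ≤ m) (hk : k = 2 ^ (m + 1) - 1)
    (ha : a = 2 ^ (m + 1)) :
    (∀ i, 1 ≤ i → i ≤ 2 ^ (m + 1) - 1 →
        2 ^ (Nat.log 2 i + 1) * ((k + i) / 2 ^ (Nat.log 2 i + 1)) = 2 ^ (m + 1)) ∧
    2 ^ (Nat.log 2 a + 1) * ((k + a) / 2 ^ (Nat.log 2 a + 1)) = 0 ∧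
    (∑ i ∈ Finset.Icc 1 a,
        2 ^ (Nat.log 2 i + 1) * ((k + i) / 2 ^ (Nat.log 2 i + 1))) = k * a :=
  stmt_5_general m k a hk ha
end

section
/- Let m, n, k be positive integers with 2(k+1) ≤ m and n - m ≥ k + 1, and suppose the identity P(N,k) - P(N-M,k) = M Σ_{r=1}^{k} C(k,r) P(M-r-1,r-1) P(N-M+r,k-r) holds for all N, M with M ≥ 2k and N - M ≥ k. Then (n - m + k + 1) * Σ_{r=1}^{k} C(k, r-1) * P(m-r-1, r-1) * P(n-m+r-1, k-r) = P(n-1, k) - P(m-k-2, k). -/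
/-!
Apply the hypothesis with `N = n - 1` and `M = n - m + k + 1`, so that `N - M = m - k - 2`;
the resulting sum becomes the required one after the reflection `r ↦ k + 1 - r` of the
summation range, which turns `C(k, r)` into `C(k, k - r + 1) = C(k, r - 1)` and swaps the
roles of the two falling factorials.
-/

open Finset

theorem Finset.sum_Icc_one_reflect {M : Type*} [AddCommMonoid M] (f : ℕ → M) (k : ℕ) :
    ∑ r ∈ Icc 1 k, f (k + 1 - r) = ∑ r ∈ Icc 1 k, f r :=
  sum_nbij' (fun r => k + 1 - r) (fun r => k + 1 - r)
    (fun r hr => by simp only [mem_Icc] at hr ⊢; omega)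
    (fun r hr => by simp only [mem_Icc] at hr ⊢; omega)
    (fun r hr => by simp only [mem_Icc] at hr; omega)
    (fun r hr => by simp only [mem_Icc] at hr; omega)
    fun _ _ => rfl

theorem stmt_11_general (m n k : ℕ)
    (h1 : 2 * (k + 1) ≤ m) (h2 : k + 1 ≤ n - m)
    (ih : ∀ N M : ℕ, 2 * k ≤ M → k ≤ N - M →
      N.descFactorial k - (N - M).descFactorial k =
        M * ∑ r ∈ Finset.Icc 1 k,
          k.choose r * (M - r - 1).descFactorial (r - 1) *
            (N - M + r).descFactorial (k - r)) :
    (n - m + k + 1) * ∑ r ∈ Finset.Icc 1 k,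
        k.choose (r - 1) * (m - r - 1).descFactorial (r - 1) *
          (n - m + r - 1).descFactorial (k - r) =
      (n - 1).descFactorial k - (m - k - 2).descFactorial k := by
  have key := ih (n - 1) (n - m + k + 1) (by omega) (by omega)
  rw [show n - 1 - (n - m + k + 1) = m - k - 2 by omega] at key
  rw [key, ← sum_Icc_one_reflect]
  refine congrArg _ (sum_congr rfl fun r hr => ?_)
  obtain ⟨hr1, hrk⟩ := mem_Icc.mp hr
  rw [show k + 1 - r - 1 = k - r by omega, Nat.choose_symm hrk,
    show m - (k + 1 - r) - 1 = m - k - 2 + r by omega,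
    show n - m + (k + 1 - r) - 1 = n - m + k + 1 - r - 1 by omega,
    show k - (k + 1 - r) = r - 1 by omega]
  ring

/-- the key inductive step identity. -/
theorem stmt_11 (m n k : ℕ) (hm : 0 < m) (hn : 0 < n) (hk : 0 < k)
    (h1 : 2 * (k + 1) ≤ m) (h2 : k + 1 ≤ n - m)
    (ih : ∀ N M : ℕ, 2 * k ≤ M → k ≤ N - M →
      N.descFactorial k - (N - M).descFactorial k =
        M * ∑ r ∈ Finset.Icc 1 k,
          k.choose r * (M - r - 1).descFactorial (r - 1) *
            (N - M + r).descFactorial (k - r)) :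
    (n - m + k + 1) * ∑ r ∈ Finset.Icc 1 k,
        k.choose (r - 1) * (m - r - 1).descFactorial (r - 1) *
          (n - m + r - 1).descFactorial (k - r) =
      (n - 1).descFactorial k - (m - k - 2).descFactorial k :=
  stmt_11_general m n k h1 h2 ih
end

section
/- Let m ≥ 1 and 2^{m+1} < k < 2^{m+2} - 1, with a = (2^{m+2} - 1) - k. Define b_i = 2^{t_i} ⌊(k+i)/2^{t_i}⌋ where 2^{t_i-1} ≤ i < 2^{t_i}, for 1 ≤ i ≤ a. Then b_i ≥ 2^{m+1} for all i, and setting T_i = b_i - 2^{m+1}, T_i equals the corresponding truncation of (k - 2^{m+1}) + i; consequently if (k - 2^{m+1}) a = Σ_{i=1}^a T_i then k a = Σ_{i=1}^a b_i. -/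
/-!
Write `k = 2^(m+1) + r`. For `1 ≤ i ≤ a` we have `i < 2^(m+1)`, so the truncation level
`t_i = log₂ i + 1` is at most `m+1` and `2^(t_i)` divides `2^(m+1)`. Truncating at level `t_i`
therefore leaves the top bit `2^(m+1)` of `k + i` untouched: `b_i = 2^(m+1) + T_i`. Summing over
`i` turns `r a = Σ T_i` into `k a = 2^(m+1) a + r a = Σ b_i`.
-/

open Finset

namespace Nat

theorem mul_add_div_of_dvd {d c : ℕ} (n : ℕ) (hdc : d ∣ c) :
    d * ((c + n) / d) = c + d * (n / d) := by
  rw [Nat.add_div_of_dvd_right hdc, Nat.mul_add, Nat.mul_div_cancel' hdc]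

theorem pow_log_succ_dvd_pow {i s : ℕ} (hi0 : i ≠ 0) (his : i < 2 ^ s) :
    2 ^ (log 2 i + 1) ∣ 2 ^ s :=
  Nat.pow_dvd_pow 2 (log_lt_of_lt_pow hi0 his)

theorem pow_log_succ_mul_div_pow_add {i s : ℕ} (r : ℕ) (hi0 : i ≠ 0) (his : i < 2 ^ s) :
    2 ^ (log 2 i + 1) * ((2 ^ s + r) / 2 ^ (log 2 i + 1)) =
      2 ^ s + 2 ^ (log 2 i + 1) * (r / 2 ^ (log 2 i + 1)) :=
  mul_add_div_of_dvd r (pow_log_succ_dvd_pow hi0 his)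

end Nat

theorem stmt_13_general (m k a : ℕ) (hk1 : 2 ^ (m + 1) < k)
    (ha : a = (2 ^ (m + 2) - 1) - k) :
    (∀ i, 1 ≤ i → i ≤ a →
        2 ^ (m + 1) ≤ 2 ^ (Nat.log 2 i + 1) * ((k + i) / 2 ^ (Nat.log 2 i + 1))) ∧
    (∀ i, 1 ≤ i → i ≤ a →
        2 ^ (Nat.log 2 i + 1) * ((k + i) / 2 ^ (Nat.log 2 i + 1)) - 2 ^ (m + 1) =
          2 ^ (Nat.log 2 i + 1) * ((k - 2 ^ (m + 1) + i) / 2 ^ (Nat.log 2 i + 1))) ∧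
    ((k - 2 ^ (m + 1)) * a =
        (∑ i ∈ Finset.Icc 1 a,
          (2 ^ (Nat.log 2 i + 1) * ((k + i) / 2 ^ (Nat.log 2 i + 1)) - 2 ^ (m + 1))) →
      k * a = ∑ i ∈ Finset.Icc 1 a,
        2 ^ (Nat.log 2 i + 1) * ((k + i) / 2 ^ (Nat.log 2 i + 1))) := by
  have key : ∀ i, 1 ≤ i → i ≤ a →
      2 ^ (Nat.log 2 i + 1) * ((k + i) / 2 ^ (Nat.log 2 i + 1)) =
        2 ^ (m + 1) + 2 ^ (Nat.log 2 i + 1) * ((k - 2 ^ (m + 1) + i) / 2 ^ (Nat.log 2 i + 1)) := by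
    intro i hi1 hia
    have hi_lt : i < 2 ^ (m + 1) := by rw [pow_succ 2 (m + 1)] at ha; omega
    rw [show k + i = 2 ^ (m + 1) + (k - 2 ^ (m + 1) + i) by omega]
    exact Nat.pow_log_succ_mul_div_pow_add _ (by omega) hi_lt
  refine ⟨fun i hi1 hia => by rw [key i hi1 hia]; omega,
    fun i hi1 hia => by rw [key i hi1 hia]; omega, fun hsum => ?_⟩
  have hkey : ∀ i ∈ Icc 1 a, _ := fun i hi => key i (mem_Icc.1 hi).1 (mem_Icc.1 hi).2
  rw [sum_congr rfl fun i hi => by rw [hkey i hi, Nat.add_sub_cancel_left]] at hsum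
  rw [sum_congr rfl hkey, sum_add_distrib, sum_const, Nat.card_Icc, ← hsum, smul_eq_mul,
    Nat.add_sub_cancel, Nat.mul_comm a, ← Nat.add_mul, Nat.add_sub_cancel' hk1.le]

/-- reduction step for 2^{m+1} < k < 2^{m+2} - 1. -/
theorem stmt_13 (m k a : ℕ) (hm : 1 ≤ m) (hk1 : 2 ^ (m + 1) < k)
    (hk2 : k < 2 ^ (m + 2) - 1) (ha : a = (2 ^ (m + 2) - 1) - k) :
    (∀ i, 1 ≤ i → i ≤ a →
        2 ^ (m + 1) ≤ 2 ^ (Nat.log 2 i + 1) * ((k + i) / 2 ^ (Nat.log 2 i + 1))) ∧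
    (∀ i, 1 ≤ i → i ≤ a →
        2 ^ (Nat.log 2 i + 1) * ((k + i) / 2 ^ (Nat.log 2 i + 1)) - 2 ^ (m + 1) =
          2 ^ (Nat.log 2 i + 1) * ((k - 2 ^ (m + 1) + i) / 2 ^ (Nat.log 2 i + 1))) ∧
    ((k - 2 ^ (m + 1)) * a =
        (∑ i ∈ Finset.Icc 1 a,
          (2 ^ (Nat.log 2 i + 1) * ((k + i) / 2 ^ (Nat.log 2 i + 1)) - 2 ^ (m + 1))) →
      k * a = ∑ i ∈ Finset.Icc 1 a,
        2 ^ (Nat.log 2 i + 1) * ((k + i) / 2 ^ (Nat.log 2 i + 1))) :=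
  stmt_13_general m k a hk1 ha
end
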